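/- arXiv:2401.14923 — 3 statements merged into one kernel-verified Lean document; each statement's English description precedes it below -/
import Mathlib

section
/- If a sequence satisfies V(N) = r_g and the recurrence V(n) = r_b + γ·(p·V(n+1) + (1-p)·V(n)) for n < N, with 0 ≤ γ < 1, 0 < p ≤ 1, then V(N - δ) = r_g·(γp/z)^δ + r_b·(1 - (γp/z)^δ)/(1 - γ), where z = 1 - γ(1-p). -/
/-!
Subtracting the fixed point `c = r_b / (1 - γ)` turns the Bellman recurrence into the linear
backward recurrence `V n - c = ρ (V (n + 1) - c)` with `ρ = γ p / (1 - γ (1 - p))`, so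
`V (N - δ) - c = ρ ^ δ (r_g - c)`.
-/

theorem eq_pow_mul_of_forall_lt_eq_mul {M : Type*} [Monoid M] {N : ℕ} {ρ : M} {u : ℕ → M}
    (h : ∀ n < N, u n = ρ * u (n + 1)) : ∀ δ ≤ N, u (N - δ) = ρ ^ δ * u N := by
  intro δ
  induction δ with
  | zero => simp
  | succ d ih =>
    intro hd
    have hstep : N - (d + 1) + 1 = N - d := by omega
    rw [h _ (by omega), hstep, ih (by omega), pow_succ', mul_assoc]

theorem bellman_sub_fixedPoint_eq {γ p r_b v w : ℝ} (hz : 1 - γ * (1 - p) ≠ 0) (hγ : 1 - γ ≠ 0)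
    (h : v = r_b + γ * (p * w + (1 - p) * v)) :
    v - r_b / (1 - γ) = γ * p / (1 - γ * (1 - p)) * (w - r_b / (1 - γ)) := by
  field_simp
  linear_combination (1 - γ) * h

theorem stmt_0_general (N : ℕ) (γ p r_g r_b : ℝ) (V : ℕ → ℝ)
    (hγ0 : 0 ≤ γ) (hγ1 : γ < 1) (hp0 : 0 < p)
    (hVN : V N = r_g)
    (hrec : ∀ n < N, V n = r_b + γ * (p * V (n + 1) + (1 - p) * V n)) :
    ∀ δ ≤ N, V (N - δ) =
      r_g * (γ * p / (1 - γ * (1 - p))) ^ δ +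
      r_b * ((1 - (γ * p / (1 - γ * (1 - p))) ^ δ) / (1 - γ)) := by
  intro δ hδ
  have hγ : 1 - γ ≠ 0 := by linarith
  have hz : 1 - γ * (1 - p) ≠ 0 := by nlinarith
  have key := eq_pow_mul_of_forall_lt_eq_mul (u := fun n ↦ V n - r_b / (1 - γ))
    (fun n hn ↦ bellman_sub_fixedPoint_eq hz hγ (hrec n hn)) δ hδ
  simp only [hVN] at key
  linear_combination key

theorem stmt_0 (N : ℕ) (γ p r_g r_b : ℝ) (V : ℕ → ℝ)
    (hγ0 : 0 ≤ γ) (hγ1 : γ < 1) (hp0 : 0 < p) (hp1 : p ≤ 1)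
    (hVN : V N = r_g)
    (hrec : ∀ n < N, V n = r_b + γ * (p * V (n + 1) + (1 - p) * V n)) :
    ∀ δ ≤ N, V (N - δ) =
      r_g * (γ * p / (1 - γ * (1 - p))) ^ δ +
      r_b * ((1 - (γ * p / (1 - γ * (1 - p))) ^ δ) / (1 - γ)) :=
  stmt_0_general N γ p r_g r_b V hγ0 hγ1 hp0 hVN hrec
end

section
/- If a sequence satisfies V(0) = r_d·γ·q/(1 - γ(1-q)) and the recurrence V(n) = γ·p_d·r_d + p_ℓ·r_ℓ + γ·p_ℓ·V(n-1) + γ·(1 - p_ℓ - p_d)·V(n) for n ≥ 1, with 0 ≤ γ < 1, p_d, p_ℓ ≥ 0, p_d + p_ℓ ≤ 1, 0 < q ≤ 1, then V(n) = r_d·(γq/v)·(γp_ℓ/u)^n + (γ·p_d·r_d + p_ℓ·r_ℓ)·(1 - (γp_ℓ/u)^n)/(1 - γ(1 - p_d)), where v = 1 - γ(1-q) and u = 1 - γ(1 - p_d - p_ℓ). -/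
/-! Solving the recurrence for `V n` turns it into the affine recurrence
`V (n+1) = c / u + b * V n` with `b = γ p_ℓ / u`, whose solution is geometric around the
fixed point `c / (u - γ p_ℓ)`; the denominator `u - γ p_ℓ` is `1 - γ (1 - p_d)`. -/

theorem affine_recurrence_eq {K : Type*} [Field K] {x : ℕ → K} {a b : K} (hb : b ≠ 1)
    (hx : ∀ n, x (n + 1) = a + b * x n) (n : ℕ) :
    x n = x 0 * b ^ n + a * (1 - b ^ n) / (1 - b) := by
  have hb' : 1 - b ≠ 0 := sub_ne_zero.mpr hb.symm
  induction n with
  | zero => simp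
  | succ n ih =>
    rw [hx, ih, pow_succ]
    field_simp
    ring

theorem stmt_7_general (γ p_d p_ell q r_d r_ell : ℝ) (V : ℕ → ℝ)
    (hγ0 : 0 ≤ γ) (hγ1 : γ < 1)
    (hpd : 0 ≤ p_d) (hpl : 0 ≤ p_ell)
    (hV0 : V 0 = r_d * γ * q / (1 - γ * (1 - q)))
    (hrec : ∀ n : ℕ, 1 ≤ n →
      V n = γ * p_d * r_d + p_ell * r_ell + γ * p_ell * V (n - 1) +
        γ * (1 - p_ell - p_d) * V n) :
    ∀ n : ℕ,
      V n = r_d * (γ * q / (1 - γ * (1 - q))) *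
              (γ * p_ell / (1 - γ * (1 - p_d - p_ell))) ^ n +
            (γ * p_d * r_d + p_ell * r_ell) *
              ((1 - (γ * p_ell / (1 - γ * (1 - p_d - p_ell))) ^ n) /
                (1 - γ * (1 - p_d))) := by
  set c := γ * p_d * r_d + p_ell * r_ell
  set u := 1 - γ * (1 - p_d - p_ell)
  set w := 1 - γ * (1 - p_d)
  have hw : 0 < w := by nlinarith
  have hu : 0 < u := by nlinarith
  have hb : γ * p_ell / u ≠ 1 := by
    rw [ne_eq, div_eq_one_iff_eq hu.ne']
    linarith
  have hstep (n : ℕ) : V (n + 1) = c / u + γ * p_ell / u * V n := by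
    have h := hrec (n + 1) n.succ_pos
    rw [Nat.add_sub_cancel] at h
    field_simp
    linarith
  have hfix : 1 - γ * p_ell / u = w / u := by
    field_simp
    ring
  intro n
  rw [affine_recurrence_eq hb hstep n, hfix, hV0]
  field_simp

theorem stmt_7 (γ p_d p_ell q r_d r_ell : ℝ) (V : ℕ → ℝ)
    (hγ0 : 0 ≤ γ) (hγ1 : γ < 1)
    (hpd : 0 ≤ p_d) (hpl : 0 ≤ p_ell) (hsum : p_d + p_ell ≤ 1)
    (hq0 : 0 < q) (hq1 : q ≤ 1)
    (hV0 : V 0 = r_d * γ * q / (1 - γ * (1 - q)))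
    (hrec : ∀ n : ℕ, 1 ≤ n →
      V n = γ * p_d * r_d + p_ell * r_ell + γ * p_ell * V (n - 1) +
        γ * (1 - p_ell - p_d) * V n) :
    ∀ n : ℕ,
      V n = r_d * (γ * q / (1 - γ * (1 - q))) *
              (γ * p_ell / (1 - γ * (1 - p_d - p_ell))) ^ n +
            (γ * p_d * r_d + p_ell * r_ell) *
              ((1 - (γ * p_ell / (1 - γ * (1 - p_d - p_ell))) ^ n) /
                (1 - γ * (1 - p_d))) :=
  stmt_7_general γ p_d p_ell q r_d r_ell V hγ0 hγ1 hpd hpl hV0 hrec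
end

section
/- Let 0 ≤ γ < 1, 0 < p ≤ 1, r_g > 0, r_b ≤ 0, and z = 1 - γ(1-p). Then 0 < γp/z < 1 whenever γ > 0, and consequently the function δ ↦ r_g·(γp/z)^δ + r_b·(1 - (γp/z)^δ)/(1-γ) crosses zero at most once from positive to negative as δ increases: if it is ≤ 0 at δ, it is ≤ 0 at δ+1. -/
/-! Writing `q = γp/z`, the map `x ↦ r_g x + r_b (1 - x)/(1 - γ)` is affine with slope
`r_g - r_b/(1 - γ) ≥ 0`, hence monotone, while `δ ↦ q^δ` is antitone because `0 ≤ q < 1`.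
Their composite is therefore antitone in `δ`, so once it is `≤ 0` it stays `≤ 0`. -/

noncomputable def effectiveDiscount (γ p : ℝ) : ℝ := γ * p / (1 - γ * (1 - p))

section EffectiveDiscount

variable {γ p : ℝ}

theorem effectiveDiscount_denom_pos (hγ0 : 0 ≤ γ) (hγ1 : γ < 1) (hp : 0 ≤ p) :
    0 < 1 - γ * (1 - p) := by
  nlinarith

theorem effectiveDiscount_nonneg (hγ0 : 0 ≤ γ) (hγ1 : γ < 1) (hp : 0 ≤ p) :
    0 ≤ effectiveDiscount γ p :=
  div_nonneg (mul_nonneg hγ0 hp) (effectiveDiscount_denom_pos hγ0 hγ1 hp).le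

theorem effectiveDiscount_pos (hγ0 : 0 < γ) (hγ1 : γ < 1) (hp : 0 < p) :
    0 < effectiveDiscount γ p :=
  div_pos (mul_pos hγ0 hp) (effectiveDiscount_denom_pos hγ0.le hγ1 hp.le)

theorem effectiveDiscount_lt_one (hγ0 : 0 ≤ γ) (hγ1 : γ < 1) (hp : 0 ≤ p) :
    effectiveDiscount γ p < 1 := by
  rw [effectiveDiscount, div_lt_one (effectiveDiscount_denom_pos hγ0 hγ1 hp)]
  linarith

theorem antitone_effectiveDiscount_pow (hγ0 : 0 ≤ γ) (hγ1 : γ < 1) (hp : 0 ≤ p) :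
    Antitone fun δ : ℕ => effectiveDiscount γ p ^ δ := fun _ _ hij =>
  pow_le_pow_of_le_one (effectiveDiscount_nonneg hγ0 hγ1 hp)
    (effectiveDiscount_lt_one hγ0 hγ1 hp).le hij

end EffectiveDiscount

theorem monotone_goal_value {γ r_g r_b : ℝ} (hγ1 : γ < 1) (hrg : 0 ≤ r_g) (hrb : r_b ≤ 0) :
    Monotone fun x : ℝ => r_g * x + r_b * ((1 - x) / (1 - γ)) := fun x y hxy => by
  have hfall : (1 - y) / (1 - γ) ≤ (1 - x) / (1 - γ) :=
    div_le_div_of_nonneg_right (by linarith) (by linarith)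
  exact add_le_add (mul_le_mul_of_nonneg_left hxy hrg) (mul_le_mul_of_nonpos_left hfall hrb)

theorem stmt_9_general (γ p r_g r_b : ℝ)
    (hγ0 : 0 ≤ γ) (hγ1 : γ < 1) (hp0 : 0 < p)
    (hrg : 0 < r_g) (hrb : r_b ≤ 0) :
    (0 < γ → 0 < γ * p / (1 - γ * (1 - p)) ∧ γ * p / (1 - γ * (1 - p)) < 1) ∧
    (∀ δ : ℕ,
      r_g * (γ * p / (1 - γ * (1 - p))) ^ δ +
        r_b * ((1 - (γ * p / (1 - γ * (1 - p))) ^ δ) / (1 - γ)) ≤ 0 →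
      r_g * (γ * p / (1 - γ * (1 - p))) ^ (δ + 1) +
        r_b * ((1 - (γ * p / (1 - γ * (1 - p))) ^ (δ + 1)) / (1 - γ)) ≤ 0) := by
  refine ⟨fun hγ => ⟨effectiveDiscount_pos hγ hγ1 hp0,
    effectiveDiscount_lt_one hγ0 hγ1 hp0.le⟩, fun δ hδ => le_trans ?_ hδ⟩
  exact (monotone_goal_value hγ1 hrg.le hrb).comp_antitone
    (antitone_effectiveDiscount_pow hγ0 hγ1 hp0.le) (Nat.le_succ δ)

theorem stmt_9 (γ p r_g r_b : ℝ)
    (hγ0 : 0 ≤ γ) (hγ1 : γ < 1) (hp0 : 0 < p) (hp1 : p ≤ 1)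
    (hrg : 0 < r_g) (hrb : r_b ≤ 0) :
    (0 < γ → 0 < γ * p / (1 - γ * (1 - p)) ∧ γ * p / (1 - γ * (1 - p)) < 1) ∧
    (∀ δ : ℕ,
      r_g * (γ * p / (1 - γ * (1 - p))) ^ δ +
        r_b * ((1 - (γ * p / (1 - γ * (1 - p))) ^ δ) / (1 - γ)) ≤ 0 →
      r_g * (γ * p / (1 - γ * (1 - p))) ^ (δ + 1) +
        r_b * ((1 - (γ * p / (1 - γ * (1 - p))) ^ (δ + 1)) / (1 - γ)) ≤ 0) :=
  stmt_9_general γ p r_g r_b hγ0 hγ1 hp0 hrg hrb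
end
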